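/- Let C̄ and extended marginals r̄_1,…,r̄_m be given by either the first or the second equivalent form, so that min_{X ∈ Π^s(r_1,…,r_m)} ⟨C, X⟩ = min_{X̄ ∈ Π(r̄_1,…,r̄_m)} ⟨C̄, X̄⟩. Let ε > 0 and let X̄ ∈ Π(r̄_1,…,r̄_m) satisfy ⟨C̄, X̄⟩ ≤ min_{Ȳ ∈ Π(r̄_1,…,r̄_m)} ⟨C̄, Ȳ⟩ + ε. Then the restriction X := X̄_{[n]^m} is an ε-approximated multimarginal partial transportation plan: c_k(X) ≤ r_k entrywise for all k ∈ [m], and ⟨C, X⟩ ≤ ⟨C, X*⟩ + ε where X* is any optimal solution of min over Π^s(r_1,…,r_m) of ⟨C, ·⟩. -/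

import Mathlib

open Finset

noncomputable section

namespace MPOT

/-- The `k`-th marginal of a tensor indexed by `[n]^m` (functions `Fin m → Fin n`). -/
def marg {m n : ℕ} (X : (Fin m → Fin n) → ℝ) (k : Fin m) (j : Fin n) : ℝ :=
  ∑ v : Fin m → Fin n, if v k = j then X v else 0

/-- Entrywise (Frobenius) inner product of tensors. -/
def dot {m n : ℕ} (C X : (Fin m → Fin n) → ℝ) : ℝ :=
  ∑ v : Fin m → Fin n, C v * X v

/-- The partial transport polytope `Π^s(r_1, …, r_m)`. -/
def PiPartial {m n : ℕ} (r : Fin m → Fin n → ℝ) (s : ℝ) :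
    Set ((Fin m → Fin n) → ℝ) :=
  {X | (∀ v, 0 ≤ X v) ∧ (∀ k j, marg X k j ≤ r k j) ∧ ∑ v : Fin m → Fin n, X v = s}

/-- The transport polytope `Π(a_1, …, a_m)` with equality marginal constraints. -/
def PiEq {m n : ℕ} (a : Fin m → Fin n → ℝ) : Set ((Fin m → Fin n) → ℝ) :=
  {X | (∀ v, 0 ≤ X v) ∧ ∀ k j, marg X k j = a k j}

/-- Embedding of `[n]^m` into `[n+1]^m`. -/
def emb {m n : ℕ} (v : Fin m → Fin n) : Fin m → Fin (n + 1) :=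
  fun i => (v i).castSucc

/-- Restriction of a tensor on `[n+1]^m` to the indices in `[n]^m`. -/
def restr {m n : ℕ} (X : (Fin m → Fin (n + 1)) → ℝ) : (Fin m → Fin n) → ℝ :=
  fun v => X (emb v)

/-- The number of coordinates of `u` equal to `n+1` (i.e. `Fin.last n`); `u ∈ T_S`
with `|S| = nLast u`. -/
def nLast {m n : ℕ} (u : Fin m → Fin (n + 1)) : ℕ :=
  (univ.filter fun ℓ => u ℓ = Fin.last n).card

/-- Extended cost tensor: the original cost on `T_∅ = [n]^m`, and value `A i` on the
`i`-th layer `∪_{|S| = i} T_S`. -/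
def extCost {m n : ℕ} (C : (Fin m → Fin n) → ℝ) (A : ℕ → ℝ) :
    (Fin m → Fin (n + 1)) → ℝ :=
  fun u =>
    if h : ∀ i, u i ≠ Fin.last n then C fun i => (u i).castPred (h i)
    else A (nLast u)

/-- Total mass of `X` on the sublayer `T_S`. -/
def layerSum {m n : ℕ} (X : (Fin m → Fin (n + 1)) → ℝ) (S : Finset (Fin m)) : ℝ :=
  ∑ u : Fin m → Fin (n + 1), if ∀ ℓ, (u ℓ = Fin.last n ↔ ℓ ∈ S) then X u else 0

/-- First-form extended marginals `r̄_k^{(1)} = [r_k, Σ_r/(m−1) − ‖r_k‖₁ − s/(m−1)]`. -/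
def extMarg1 {m n : ℕ} (r : Fin m → Fin n → ℝ) (s : ℝ) : Fin m → Fin (n + 1) → ℝ :=
  fun k => Fin.snoc (r k)
    ((∑ i, ∑ j, r i j) / ((m : ℝ) - 1) - (∑ j, r k j) - s / ((m : ℝ) - 1))

/-- Second-form extended marginals `r̄_k^{(2)} = [r_k, Σ_{i≠k} ‖r_i‖₁ − (m−1)s]`. -/
def extMarg2 {m n : ℕ} (r : Fin m → Fin n → ℝ) (s : ℝ) : Fin m → Fin (n + 1) → ℝ :=
  fun k => Fin.snoc (r k) ((∑ i ∈ univ.erase k, ∑ j, r i j) - ((m : ℝ) - 1) * s)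

theorem sum_comp_le_sum_of_injective {ι κ M : Type*} [Fintype ι] [Fintype κ]
    [AddCommMonoid M] [PartialOrder M] [IsOrderedAddMonoid M] {g : ι → κ}
    (hg : g.Injective) {f : κ → M} (hf : 0 ≤ f) : ∑ i, f (g i) ≤ ∑ k, f k := by
  simpa only [sum_map, Function.Embedding.coeFn_mk] using
    sum_le_univ_sum_of_nonneg (s := univ.map ⟨g, hg⟩) hf

theorem emb_injective {m n : ℕ} : (emb : (Fin m → Fin n) → Fin m → Fin (n + 1)).Injective :=
  fun _ _ h => funext fun i => Fin.castSucc_injective _ (congrFun h i)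

theorem marg_restr_le {m n : ℕ} {X : (Fin m → Fin (n + 1)) → ℝ} (hX : 0 ≤ X)
    (k : Fin m) (j : Fin n) : marg (restr X) k j ≤ marg X k j.castSucc := by
  have h := sum_comp_le_sum_of_injective emb_injective
    (f := fun u => if u k = j.castSucc then X u else 0) fun u => ite_nonneg (hX u) le_rfl
  simpa only [marg, restr, emb, Fin.castSucc_inj] using h

theorem dot_restr_le {m n : ℕ} {C : (Fin m → Fin n) → ℝ} {Cb X : (Fin m → Fin (n + 1)) → ℝ}
    (hagree : ∀ v, Cb (emb v) = C v) (hCb : 0 ≤ Cb) (hX : 0 ≤ X) :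
    dot C (restr X) ≤ dot Cb X := by
  have h := sum_comp_le_sum_of_injective emb_injective (f := fun u => Cb u * X u)
    fun u => mul_nonneg (hCb u) (hX u)
  simpa only [dot, restr, hagree] using h

end MPOT

open MPOT

theorem approx_mpot_transfer_general {m n : ℕ}
    (C : (Fin m → Fin n) → ℝ)
    (r : Fin m → Fin n → ℝ)
    (s : ℝ)
    (Cb : (Fin m → Fin (n + 1)) → ℝ) (hCb0 : ∀ u, 0 ≤ Cb u)
    (hagree : ∀ v : Fin m → Fin n, Cb (emb v) = C v)
    (rb : Fin m → Fin (n + 1) → ℝ)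
    (hrb : ∀ (k : Fin m) (j : Fin n), rb k j.castSucc = r k j)
    (heq : sInf ((fun X => dot C X) '' PiPartial r s)
      = sInf ((fun Y => dot Cb Y) '' PiEq rb))
    (ε : ℝ)
    (Xb : (Fin m → Fin (n + 1)) → ℝ) (hXb : Xb ∈ PiEq rb)
    (hXbε : dot Cb Xb ≤ sInf ((fun Y => dot Cb Y) '' PiEq rb) + ε)
    (Xstar : (Fin m → Fin n) → ℝ) (hstar : Xstar ∈ PiPartial r s)
    (hstaropt : ∀ Y ∈ PiPartial r s, dot C Xstar ≤ dot C Y) :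
    (∀ k j, marg (restr Xb) k j ≤ r k j) ∧
      dot C (restr Xb) ≤ dot C Xstar + ε := by
  obtain ⟨hXb0, hXbm⟩ := hXb
  refine ⟨fun k j => ?_, ?_⟩
  · calc marg (restr Xb) k j ≤ marg Xb k j.castSucc := marg_restr_le hXb0 k j
      _ = r k j := by rw [hXbm, hrb]
  · have hmin : sInf ((fun X => dot C X) '' PiPartial r s) = dot C Xstar :=
      IsLeast.csInf_eq ⟨⟨Xstar, hstar, rfl⟩, by rintro _ ⟨Y, hY, rfl⟩; exact hstaropt Y hY⟩
    calc dot C (restr Xb) ≤ dot Cb Xb := dot_restr_le hagree hCb0 hXb0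
      _ ≤ sInf ((fun Y => dot Cb Y) '' PiEq rb) + ε := hXbε
      _ = dot C Xstar + ε := by rw [← heq, hmin]

/-- Proposition 3.3 / ε-approximation transfer: if the extended cost `Cb`
is nonnegative, agrees with `C` on `[n]^m`, the extended marginals `rb` agree with the
`r_k` on their first `n` entries, and the optimal values of the partial problem and the
extended problem coincide, then the restriction to `[n]^m` of any `ε`-optimal plan for
the extended problem is an `ε`-approximated multimarginal partial transportation plan. -/
theorem approx_mpot_transfer {m n : ℕ} (hm : 2 ≤ m) (hn : 1 ≤ n)
    (C : (Fin m → Fin n) → ℝ) (hC : ∀ v, 0 ≤ C v)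
    (r : Fin m → Fin n → ℝ) (hr : ∀ k j, 0 ≤ r k j)
    (s : ℝ) (hs0 : 0 ≤ s) (hs : ∀ k, s ≤ ∑ j, r k j)
    (Cb : (Fin m → Fin (n + 1)) → ℝ) (hCb0 : ∀ u, 0 ≤ Cb u)
    (hagree : ∀ v : Fin m → Fin n, Cb (emb v) = C v)
    (rb : Fin m → Fin (n + 1) → ℝ)
    (hrb : ∀ (k : Fin m) (j : Fin n), rb k j.castSucc = r k j)
    (heq : sInf ((fun X => dot C X) '' PiPartial r s)
      = sInf ((fun Y => dot Cb Y) '' PiEq rb))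
    (ε : ℝ) (hε : 0 < ε)
    (Xb : (Fin m → Fin (n + 1)) → ℝ) (hXb : Xb ∈ PiEq rb)
    (hXbε : dot Cb Xb ≤ sInf ((fun Y => dot Cb Y) '' PiEq rb) + ε)
    (Xstar : (Fin m → Fin n) → ℝ) (hstar : Xstar ∈ PiPartial r s)
    (hstaropt : ∀ Y ∈ PiPartial r s, dot C Xstar ≤ dot C Y) :
    (∀ k j, marg (restr Xb) k j ≤ r k j) ∧
      dot C (restr Xb) ≤ dot C Xstar + ε :=
  approx_mpot_transfer_general C r s Cb hCb0 hagree rb hrb heq ε Xb hXb hXbε Xstar hstar hstaropt
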